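/- arXiv:2203.03492 — 5 statements merged into one kernel-verified Lean document; each statement's English description precedes it below -/
import Mathlib

section
/- For every ε > 0 and every ε' with 0 < ε' ≤ (2/3)ε, every recurrently ε'-weakly temperable point is recurrently ε-weakly temperable, i.e. RWT_χ^{ε'} ⊆ RWT_χ^{ε}; similarly WT_χ^{ε'} ⊆ WT_χ^{ε}. -/
/-- `Q_ε(x)`: the largest element of `{e^{-ℓε/3} : ℓ ∈ ℕ}` not exceeding
`(1/3^{6/β}) ε^{90/β} ‖C_χ^{-1}(x)‖^{-48/β}`; here `c` stands for
`‖C_χ^{-1}(x)‖`. -/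
noncomputable def Qeps (β ε c : ℝ) : ℝ :=
  sSup {Q : ℝ | (∃ ℓ : ℕ, Q = Real.exp (-((ℓ : ℝ) * ε) / 3)) ∧
    Q ≤ (1 / (3 : ℝ) ^ ((6 : ℝ) / β)) * ε ^ ((90 : ℝ) / β) * c ^ (-((48 : ℝ) / β))}

/-- `x` is `ε`-weakly temperable: there is a kernel `q` along the orbit of `x`
taking values in `{e^{-ℓε/3}}`, with `e^{-ε} ≤ q∘f/q ≤ e^{ε}` and
`q(f^n x) ≤ Q_ε(f^n x)` for all `n ∈ ℤ`. -/
def WeaklyTemperable {M : Type*} (f : Equiv.Perm M) (β : ℝ) (c : M → ℝ)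
    (ε : ℝ) (x : M) : Prop :=
  ∃ q : ℤ → ℝ,
    (∀ n : ℤ, ∃ ℓ : ℕ, q n = Real.exp (-((ℓ : ℝ) * ε) / 3)) ∧
    (∀ n : ℤ, Real.exp (-ε) ≤ q (n + 1) / q n ∧ q (n + 1) / q n ≤ Real.exp ε) ∧
    (∀ n : ℤ, q n ≤ Qeps β ε (c ((f ^ n) x)))

/-- `x` is recurrently `ε`-weakly temperable: the kernel `q` can moreover be
chosen with `limsup_{n→±∞} q(f^n x) > 0`. -/
def RecurrentlyWeaklyTemperable {M : Type*} (f : Equiv.Perm M) (β : ℝ)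
    (c : M → ℝ) (ε : ℝ) (x : M) : Prop :=
  ∃ q : ℤ → ℝ,
    (∀ n : ℤ, ∃ ℓ : ℕ, q n = Real.exp (-((ℓ : ℝ) * ε) / 3)) ∧
    (∀ n : ℤ, Real.exp (-ε) ≤ q (n + 1) / q n ∧ q (n + 1) / q n ≤ Real.exp ε) ∧
    (∀ n : ℤ, q n ≤ Qeps β ε (c ((f ^ n) x))) ∧
    (∃ c0 : ℝ, 0 < c0 ∧ (∀ N : ℕ, ∃ n : ℤ, (N : ℤ) ≤ n ∧ c0 ≤ q n) ∧
      (∀ N : ℕ, ∃ n : ℤ, n ≤ -(N : ℤ) ∧ c0 ≤ q n))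

open Real

noncomputable def Qbound (β ε c : ℝ) : ℝ :=
  1 / (3 : ℝ) ^ ((6 : ℝ) / β) * ε ^ ((90 : ℝ) / β) * c ^ (-((48 : ℝ) / β))

section Qeps

variable {β ε c : ℝ}

lemma Qeps_le_Qbound (hε : 0 ≤ ε) (hc : 0 ≤ c) : Qeps β ε c ≤ Qbound β ε c :=
  Real.sSup_le (fun _ hQ => hQ.2) (by unfold Qbound; positivity)

lemma le_Qeps {Q : ℝ} (hQ : ∃ ℓ : ℕ, Q = exp (-((ℓ : ℝ) * ε) / 3)) (h : Q ≤ Qbound β ε c) :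
    Q ≤ Qeps β ε c :=
  le_csSup ⟨Qbound β ε c, fun _ hQ => hQ.2⟩ ⟨hQ, h⟩

lemma Qbound_mono {ε' : ℝ} (hβ : 0 ≤ β) (hc : 0 ≤ c) (hε'0 : 0 ≤ ε') (hε' : ε' ≤ ε) :
    Qbound β ε' c ≤ Qbound β ε c := by
  unfold Qbound
  gcongr

end Qeps

lemma exp_grid_ratio_bounds_iff {ε : ℝ} (hε : 0 < ε) (a b : ℝ) :
    (exp (-ε) ≤ exp (-(b * ε) / 3) / exp (-(a * ε) / 3) ∧
      exp (-(b * ε) / 3) / exp (-(a * ε) / 3) ≤ exp ε) ↔ |b - a| ≤ 3 := by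
  rw [← exp_sub, exp_le_exp, exp_le_exp, abs_le]
  constructor <;> rintro ⟨h₁, h₂⟩ <;> constructor <;> nlinarith

lemma abs_natCeil_sub_natCeil_le {R : Type*} [Field R] [LinearOrder R] [IsStrictOrderedRing R]
    [FloorSemiring R] {x y : R} (hx : 0 ≤ x) (hy : 0 ≤ y) :
    |(⌈x⌉₊ : R) - ⌈y⌉₊| ≤ |x - y| + 1 := by
  have := Nat.ceil_lt_add_one hx
  have := Nat.ceil_lt_add_one hy
  have := Nat.le_ceil x
  have := Nat.le_ceil y
  rw [abs_le]
  constructor <;> linarith [neg_abs_le (x - y), le_abs_self (x - y)]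

/-- `WeaklyTemperable f β c ε x` unfolds to
`∃ q, IsTemperingKernel β ε (fun n => c ((f ^ n) x)) q`. -/
def IsTemperingKernel (β ε : ℝ) (cs q : ℤ → ℝ) : Prop :=
  (∀ n : ℤ, ∃ ℓ : ℕ, q n = exp (-((ℓ : ℝ) * ε) / 3)) ∧
  (∀ n : ℤ, exp (-ε) ≤ q (n + 1) / q n ∧ q (n + 1) / q n ≤ exp ε) ∧
  (∀ n : ℤ, q n ≤ Qeps β ε (cs n))

/-- Rounding each exponent `ℓ ε' / 3` of `q'` up to the `ε`-grid: exponents of `q'` jump by at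
most `3`, so the rescaled exponents `ℓ ε' / ε` jump by at most `2`, and after rounding by at most
`3`. -/
theorem IsTemperingKernel.exists_coarser {β ε ε' : ℝ} {cs q' : ℤ → ℝ} (hβ : 0 ≤ β)
    (hcs : ∀ n, 0 ≤ cs n) (hε'0 : 0 < ε') (hε' : ε' ≤ 2 / 3 * ε)
    (hq' : IsTemperingKernel β ε' cs q') :
    ∃ q, IsTemperingKernel β ε cs q ∧ ∀ n, exp (-ε / 3) * q' n ≤ q n := by
  obtain ⟨hgrid, hratio, hle⟩ := hq'
  choose g hg using hgrid
  have hε : 0 < ε := by linarith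
  set L : ℤ → ℕ := fun n => ⌈(g n : ℝ) * ε' / ε⌉₊
  have hL_ge (n : ℤ) : g n * ε' ≤ L n * ε := (div_le_iff₀ hε).1 (Nat.le_ceil _)
  have hL_le (n : ℤ) : L n * ε ≤ g n * ε' + ε := by
    have := Nat.ceil_lt_add_one (show 0 ≤ (g n : ℝ) * ε' / ε by positivity)
    rw [div_add_one hε.ne', lt_div_iff₀ hε] at this
    exact this.le
  have hg_step (n : ℤ) : |(g (n + 1) : ℝ) - g n| ≤ 3 := by
    have := hratio n
    rwa [hg, hg, exp_grid_ratio_bounds_iff hε'0] at this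
  have hL_step (n : ℤ) : |(L (n + 1) : ℝ) - L n| ≤ 3 :=
    calc |(L (n + 1) : ℝ) - L n|
        ≤ |(g (n + 1) : ℝ) * ε' / ε - g n * ε' / ε| + 1 :=
          abs_natCeil_sub_natCeil_le (by positivity) (by positivity)
      _ = |(g (n + 1) : ℝ) - g n| * (ε' / ε) + 1 := by
          rw [mul_div_assoc, mul_div_assoc, ← sub_mul, abs_mul, abs_of_pos (div_pos hε'0 hε)]
      _ ≤ 3 * (2 / 3) + 1 := by
          have hr : ε' / ε ≤ 2 / 3 := (div_le_iff₀ hε).2 (by linarith)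
          gcongr ?_ * ?_ + 1
          exact hg_step n
      _ = 3 := by norm_num
  refine ⟨fun n => exp (-((L n : ℝ) * ε) / 3),
    ⟨fun n => ⟨L n, rfl⟩, fun n => (exp_grid_ratio_bounds_iff hε _ _).2 (hL_step n),
      fun n => le_Qeps ⟨L n, rfl⟩ ?_⟩, fun n => ?_⟩
  · calc exp (-((L n : ℝ) * ε) / 3) ≤ q' n := by rw [hg, exp_le_exp]; linarith [hL_ge n]
      _ ≤ Qbound β ε' (cs n) := (hle n).trans (Qeps_le_Qbound hε'0.le (hcs n))
      _ ≤ Qbound β ε (cs n) := Qbound_mono hβ (hcs n) hε'0.le (by linarith)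
  · rw [hg, ← exp_add, exp_le_exp]
    linarith [hL_le n]

theorem RWT_and_WT_monotone_in_epsilon_general
    {M : Type*} (f : Equiv.Perm M) (β : ℝ) (hβ : 0 < β)
    (c : M → ℝ) (hc : ∀ x, 1 ≤ c x)
    (ε ε' : ℝ) (hε'0 : 0 < ε') (hε' : ε' ≤ (2 / 3) * ε) :
    (∀ x : M, RecurrentlyWeaklyTemperable f β c ε' x →
        RecurrentlyWeaklyTemperable f β c ε x) ∧
    (∀ x : M, WeaklyTemperable f β c ε' x → WeaklyTemperable f β c ε x) := by
  have hcs (x : M) (n : ℤ) : 0 ≤ c ((f ^ n) x) := zero_le_one.trans (hc _)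
  refine ⟨?_, ?_⟩
  · rintro x ⟨q', h₁, h₂, h₃, c₀, hc₀, hfwd, hbwd⟩
    obtain ⟨q, ⟨hq₁, hq₂, hq₃⟩, hq'q⟩ :=
      IsTemperingKernel.exists_coarser hβ.le (hcs x) hε'0 hε' ⟨h₁, h₂, h₃⟩
    have hrec (n : ℤ) (h : c₀ ≤ q' n) : exp (-ε / 3) * c₀ ≤ q n :=
      (mul_le_mul_of_nonneg_left h (exp_pos _).le).trans (hq'q n)
    exact ⟨q, hq₁, hq₂, hq₃, exp (-ε / 3) * c₀, by positivity,
      fun N => (hfwd N).imp fun n h => ⟨h.1, hrec n h.2⟩,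
      fun N => (hbwd N).imp fun n h => ⟨h.1, hrec n h.2⟩⟩
  · rintro x ⟨q', hq'⟩
    obtain ⟨q, hq, -⟩ := IsTemperingKernel.exists_coarser hβ.le (hcs x) hε'0 hε' hq'
    exact ⟨q, hq⟩

/-- For every `ε > 0` and every `ε'` with `0 < ε' ≤ (2/3)ε`,
every recurrently `ε'`-weakly temperable point is recurrently `ε`-weakly
temperable, i.e. `RWT_χ^{ε'} ⊆ RWT_χ^{ε}`; similarly `WT_χ^{ε'} ⊆ WT_χ^{ε}`. -/
theorem RWT_and_WT_monotone_in_epsilon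
    {M : Type*} (f : Equiv.Perm M) (β : ℝ) (hβ : 0 < β)
    (c : M → ℝ) (hc : ∀ x, 1 ≤ c x)
    (ε ε' : ℝ) (hε : 0 < ε) (hε'0 : 0 < ε') (hε' : ε' ≤ (2 / 3) * ε) :
    (∀ x : M, RecurrentlyWeaklyTemperable f β c ε' x →
        RecurrentlyWeaklyTemperable f β c ε x) ∧
    (∀ x : M, WeaklyTemperable f β c ε' x → WeaklyTemperable f β c ε x) :=
  RWT_and_WT_monotone_in_epsilon_general f β hβ c hc ε ε' hε'0 hε'
end

section
/- Let Σ be a two-sided topological Markov shift over a countable alphabet and suppose π : Σ → M is a factor map with the property that for every point q in some set the fiber π^{-1}({q}) ∩ Σ^# is finite. If q is a periodic point of f with f^n(q) = q and π∘σ = f∘π, then every chain R in π^{-1}({q}) ∩ Σ^# is eventually periodic under σ^n, and in fact there exists m ≥ 1 with σ^{mn}(R) = R for some chain R ∈ π^{-1}({q}) ∩ Σ^#; i.e., q has a σ-periodic coding. -/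
open Function Set

theorem Set.Finite.exists_isPeriodicPt_of_mapsTo {α : Type*} {g : α → α} {s : Set α}
    (hs : s.Finite) (hne : s.Nonempty) (hg : MapsTo g s s) :
    ∃ m, 0 < m ∧ ∃ x ∈ s, IsPeriodicPt g m x := by
  obtain ⟨x, hx⟩ := hne
  obtain ⟨i, j, hij, hrepeat⟩ :=
    hs.exists_lt_map_eq_of_forall_mem (f := fun k ↦ g^[k] x) fun k ↦ hg.iterate k hx
  refine ⟨j - i, by omega, g^[i] x, hg.iterate i hx, ?_⟩
  calc g^[j - i] (g^[i] x) = g^[j] x := by rw [← iterate_add_apply, Nat.sub_add_cancel hij.le]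
    _ = g^[i] x := hrepeat.symm

theorem periodic_point_has_periodic_coding_general
    {Z : Type*} (σ : Z → Z)
    (n : ℕ)
    (F : Set Z)
    (hfin : F.Finite) (hne : F.Nonempty)
    (hinv : ∀ R ∈ F, σ^[n] R ∈ F) :
    ∃ m : ℕ, 1 ≤ m ∧ ∃ R ∈ F, σ^[m * n] R = R := by
  obtain ⟨m, hm, R, hR, hperiodic⟩ := hfin.exists_isPeriodicPt_of_mapsTo hne hinv
  exact ⟨m, hm, R, hR, by rwa [mul_comm, iterate_mul]⟩

/-- Let `π : Z → M` be a factor map from a two-sided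
topological Markov shift (with shift `σ`) intertwining `σ` and `f`, which is
finite-to-one on a subset `Sharp`.  If `q` is a periodic point of `f` of
period `n`, and the fiber `F = π⁻¹{q} ∩ Sharp` is nonempty, finite and
invariant under `σ^n`, then by pigeonhole there is `m ≥ 1` and a chain
`R ∈ F` with `σ^{mn} R = R`; i.e. `q` has a `σ`-periodic coding. -/
theorem periodic_point_has_periodic_coding
    {Z M : Type*} (σ : Z → Z) (f : M → M) (π : Z → M)
    (hfactor : ∀ x, π (σ x) = f (π x))
    (Sharp : Set Z) (q : M) (n : ℕ) (hn : 1 ≤ n) (hq : f^[n] q = q)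
    (F : Set Z) (hF : F = π ⁻¹' {q} ∩ Sharp)
    (hfin : F.Finite) (hne : F.Nonempty)
    (hinv : ∀ R ∈ F, σ^[n] R ∈ F) :
    ∃ m : ℕ, 1 ≤ m ∧ ∃ R ∈ F, σ^[m * n] R = R :=
  periodic_point_has_periodic_coding_general σ n F hfin hne hinv
end

section
/- Sinai's coboundary theorem for Markov partitions: let φ be a function on the disjoint union of a countable Markov partition, Hölder with respect to the symbolic metric via the coding, and for each partition element a fix a base point y_a. Define x* = [x, y_{R(x)}] (the Smale bracket replacing the future of x by that of y_{R(x)}), and A(x) = Σ_{n≥0} (φ(f^{-n}(x*)) − φ(f^{-n}(x))). Then A is well-defined (the series converges uniformly), bounded, and the function φ* = φ + A − A∘f^{-1} satisfies: φ*(x) depends only on the past itinerary (R(f^{-i}(x)))_{i≥0} of x. -/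
/-!
Since `x*` and `x` share their past, `f^{-n}(x*)` and `f^{-n}(x)` have the same symbols on
coordinates `-n, …, n`, so the `n`-th term of `A(x)` is at most `C θ^n`; this gives uniform
convergence and the bound `C / (1 - θ)`. Shifting the index in `A(x)` telescopes `φ*` into
`φ*(x) = φ(x*) + Σ_{n≥0} [φ(f^{-n}(f^{-1}(x*))) − φ(f^{-n}((f^{-1}(x))*))]`, and every
point in this expression depends only on the past of `x`: the bracket `x*` is determined by
the past of `x` and the symbol `R(x)`, because the coding is injective.
-/

/-- The Sinai transfer function
`A(x) = Σ_{n≥0} (φ(f^{-n}(x*)) − φ(f^{-n}(x)))`. -/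
noncomputable def sinaiA {X : Type*} (f : Equiv.Perm X) (star : X → X)
    (φ : X → ℝ) (x : X) : ℝ :=
  ∑' n : ℕ, (φ ((f ^ (-(n : ℤ))) (star x)) - φ ((f ^ (-(n : ℤ))) x))

/-- `φ* = φ + A − A∘f^{-1}`. -/
noncomputable def sinaiPhiStar {X : Type*} (f : Equiv.Perm X) (star : X → X)
    (φ : X → ℝ) (x : X) : ℝ :=
  φ x + sinaiA f star φ x - sinaiA f star φ (f.symm x)

namespace Sinai

variable {X A : Type*} (f : Equiv.Perm X) (R : X → A)

lemma zpow_apply_zpow_apply (a b : ℤ) (w : X) : (f ^ a) ((f ^ b) w) = (f ^ (a + b)) w := by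
  rw [zpow_add, Equiv.Perm.mul_apply]

lemma symm_apply_eq_zpow_neg_one_apply (w : X) : f.symm w = (f ^ (-1 : ℤ)) w := by
  rw [zpow_neg_one]
  rfl

def SamePast (u v : X) : Prop :=
  ∀ i : ℕ, R ((f ^ (-(i : ℤ))) u) = R ((f ^ (-(i : ℤ))) v)

def SymbolicHolder (C θ : ℝ) (φ : X → ℝ) : Prop :=
  ∀ x z : X, ∀ n : ℕ,
    (∀ i : ℤ, |i| ≤ (n : ℤ) → R ((f ^ i) x) = R ((f ^ i) z)) → |φ x - φ z| ≤ C * θ ^ n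

variable {f R}

lemma SamePast.symm_apply {u v : X} (h : SamePast f R u v) :
    SamePast f R (f.symm u) (f.symm v) := by
  intro i
  have hi : -(i : ℤ) + -1 = -((i + 1 : ℕ) : ℤ) := by push_cast; ring
  simpa only [symm_apply_eq_zpow_neg_one_apply, zpow_apply_zpow_apply, hi] using h (i + 1)

lemma SamePast.zpow_neg_apply {u v : X} (h : SamePast f R u v) (n : ℕ) (i : ℤ)
    (hi : |i| ≤ n) :
    R ((f ^ i) ((f ^ (-(n : ℤ))) u)) = R ((f ^ i) ((f ^ (-(n : ℤ))) v)) := by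
  have hm : i + -(n : ℤ) = -(((n - i).toNat : ℕ) : ℤ) := by
    have := abs_le.mp hi
    omega
  simpa only [zpow_apply_zpow_apply, hm] using h (n - i).toNat

section Holder

variable {φ : X → ℝ} {C θ : ℝ} {u v : X}

lemma abs_sub_le_of_samePast
    (hHolder : SymbolicHolder f R C θ φ) (h : SamePast f R u v) (n : ℕ) :
    |φ ((f ^ (-(n : ℤ))) u) - φ ((f ^ (-(n : ℤ))) v)| ≤ C * θ ^ n :=
  hHolder _ _ n (h.zpow_neg_apply n)

lemma summable_of_samePast (hθ0 : 0 ≤ θ) (hθ1 : θ < 1)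
    (hHolder : SymbolicHolder f R C θ φ) (h : SamePast f R u v) :
    Summable fun n : ℕ => φ ((f ^ (-(n : ℤ))) u) - φ ((f ^ (-(n : ℤ))) v) :=
  .of_norm_bounded ((summable_geometric_of_lt_one hθ0 hθ1).mul_left C)
    (abs_sub_le_of_samePast hHolder h)

lemma abs_tsum_le_of_samePast (hθ0 : 0 ≤ θ) (hθ1 : θ < 1)
    (hHolder : SymbolicHolder f R C θ φ) (h : SamePast f R u v) :
    |∑' n : ℕ, (φ ((f ^ (-(n : ℤ))) u) - φ ((f ^ (-(n : ℤ))) v))| ≤ C * (1 - θ)⁻¹ := by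
  rw [← tsum_geometric_of_lt_one hθ0 hθ1, ← tsum_mul_left]
  exact tsum_of_norm_bounded
    (f := fun n : ℕ => φ ((f ^ (-(n : ℤ))) u) - φ ((f ^ (-(n : ℤ))) v))
    ((summable_geometric_of_lt_one hθ0 hθ1).mul_left C).hasSum (abs_sub_le_of_samePast hHolder h)

end Holder

lemma star_eq_of_samePast {star : X → X} {y : A → X}
    (hcode : ∀ x z : X, (∀ i : ℤ, R ((f ^ i) x) = R ((f ^ i) z)) → x = z)
    (hstarPast : ∀ x : X, SamePast f R (star x) x)
    (hstarFuture : ∀ x : X, ∀ i : ℕ,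
      R ((f ^ (i : ℤ)) (star x)) = R ((f ^ (i : ℤ)) (y (R x))))
    {u v : X} (h : SamePast f R u v) : star u = star v := by
  have hR : R u = R v := by simpa using h 0
  refine hcode _ _ fun i => ?_
  obtain ⟨m, rfl | rfl⟩ := Int.eq_nat_or_neg i
  · rw [hstarFuture u m, hstarFuture v m, hR]
  · rw [hstarPast u m, hstarPast v m, h m]

lemma sinaiPhiStar_eq_add_tsum {star : X → X} {φ : X → ℝ} {w : X}
    (hw : Summable fun n : ℕ => φ ((f ^ (-(n : ℤ))) (star w)) - φ ((f ^ (-(n : ℤ))) w))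
    (hw' : Summable fun n : ℕ =>
      φ ((f ^ (-(n : ℤ))) (star (f.symm w))) - φ ((f ^ (-(n : ℤ))) (f.symm w))) :
    sinaiPhiStar f star φ w = φ (star w) + ∑' n : ℕ,
      (φ ((f ^ (-(n : ℤ))) (f.symm (star w))) - φ ((f ^ (-(n : ℤ))) (star (f.symm w)))) := by
  have hshift (n : ℕ) (v : X) :
      (f ^ (-((n + 1 : ℕ) : ℤ))) v = (f ^ (-(n : ℤ))) (f.symm v) := by
    rw [symm_apply_eq_zpow_neg_one_apply, zpow_apply_zpow_apply]
    congr 2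
    push_cast
    ring
  have htail : sinaiA f star φ w - sinaiA f star φ (f.symm w) =
      φ (star w) - φ w + ∑' n : ℕ,
        (φ ((f ^ (-(n : ℤ))) (f.symm (star w))) - φ ((f ^ (-(n : ℤ))) (star (f.symm w)))) := by
    rw [sinaiA, sinaiA, hw.tsum_eq_zero_add, add_sub_assoc,
      ← (((summable_nat_add_iff 1).mpr hw).tsum_sub hw')]
    simp only [hshift, Nat.cast_zero, neg_zero, zpow_zero, Equiv.Perm.coe_one, id_eq]
    congr 1
    exact tsum_congr fun n => by ring
  rw [sinaiPhiStar, add_sub_assoc, htail]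
  ring

end Sinai

open Sinai in
theorem sinai_coboundary_theorem_general
    {X A : Type*} (f : Equiv.Perm X) (R : X → A) (y : A → X)
    (star : X → X) (φ : X → ℝ)
    -- the coding is injective: a point is determined by its full itinerary
    (hcode : ∀ x z : X, (∀ i : ℤ, R ((f ^ i) x) = R ((f ^ i) z)) → x = z)
    -- the Smale bracket: `x*` has the past of `x` and the future of `y (R x)`
    (hstarPast : ∀ x : X, ∀ i : ℕ,
      R ((f ^ (-(i : ℤ))) (star x)) = R ((f ^ (-(i : ℤ))) x))
    (hstarFuture : ∀ x : X, ∀ i : ℕ,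
      R ((f ^ (i : ℤ)) (star x)) = R ((f ^ (i : ℤ)) (y (R x))))
    -- weak Hölder continuity of `φ` with respect to the symbolic metric
    (C θ : ℝ) (hθ0 : 0 < θ) (hθ1 : θ < 1)
    (hHolder : ∀ x z : X, ∀ n : ℕ,
      (∀ i : ℤ, |i| ≤ (n : ℤ) → R ((f ^ i) x) = R ((f ^ i) z)) →
      |φ x - φ z| ≤ C * θ ^ n) :
    (∀ x : X, Summable (fun n : ℕ =>
        φ ((f ^ (-(n : ℤ))) (star x)) - φ ((f ^ (-(n : ℤ))) x))) ∧
    (∃ B : ℝ, ∀ x : X, |sinaiA f star φ x| ≤ B) ∧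
    (∀ x z : X, (∀ i : ℕ, R ((f ^ (-(i : ℤ))) x) = R ((f ^ (-(i : ℤ))) z)) →
        sinaiPhiStar f star φ x = sinaiPhiStar f star φ z) := by
  have hsum (x : X) := summable_of_samePast hθ0.le hθ1 hHolder (hstarPast x)
  have hstar {u v : X} (h : SamePast f R u v) : star u = star v :=
    star_eq_of_samePast hcode hstarPast hstarFuture h
  refine ⟨hsum, ⟨C * (1 - θ)⁻¹,
    fun x => abs_tsum_le_of_samePast hθ0.le hθ1 hHolder (hstarPast x)⟩, fun x z hxz => ?_⟩
  rw [sinaiPhiStar_eq_add_tsum (hsum x) (hsum (f.symm x)),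
    sinaiPhiStar_eq_add_tsum (hsum z) (hsum (f.symm z)),
    hstar hxz, hstar (SamePast.symm_apply hxz)]

/-- **Sinai's coboundary theorem for Markov partitions.**
`R` is the itinerary symbol map of a countable Markov partition with the
rectangle (Smale bracket) property, `y a` is a fixed base point of the
partition element `a`, and `x* = star x = [x, y_{R(x)}]` replaces the future
of `x` by that of `y_{R(x)}`.  If `φ` is Hölder with respect to the symbolic
metric via the (injective) coding, then the series defining `A` converges,
`A` is bounded, and `φ* = φ + A − A∘f^{-1}` depends only on the past
itinerary `(R(f^{-i} x))_{i≥0}` of `x`. -/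
theorem sinai_coboundary_theorem
    {X A : Type*} (f : Equiv.Perm X) (R : X → A) (y : A → X)
    (star : X → X) (φ : X → ℝ)
    (hy : ∀ a : A, R (y a) = a)
    -- the coding is injective: a point is determined by its full itinerary
    (hcode : ∀ x z : X, (∀ i : ℤ, R ((f ^ i) x) = R ((f ^ i) z)) → x = z)
    -- the Smale bracket: `x*` has the past of `x` and the future of `y (R x)`
    (hstarPast : ∀ x : X, ∀ i : ℕ,
      R ((f ^ (-(i : ℤ))) (star x)) = R ((f ^ (-(i : ℤ))) x))
    (hstarFuture : ∀ x : X, ∀ i : ℕ,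
      R ((f ^ (i : ℤ)) (star x)) = R ((f ^ (i : ℤ)) (y (R x))))
    -- weak Hölder continuity of `φ` with respect to the symbolic metric
    (C θ : ℝ) (hC : 0 ≤ C) (hθ0 : 0 < θ) (hθ1 : θ < 1)
    (hHolder : ∀ x z : X, ∀ n : ℕ,
      (∀ i : ℤ, |i| ≤ (n : ℤ) → R ((f ^ i) x) = R ((f ^ i) z)) →
      |φ x - φ z| ≤ C * θ ^ n) :
    (∀ x : X, Summable (fun n : ℕ =>
        φ ((f ^ (-(n : ℤ))) (star x)) - φ ((f ^ (-(n : ℤ))) x))) ∧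
    (∃ B : ℝ, ∀ x : X, |sinaiA f star φ x| ≤ B) ∧
    (∀ x z : X, (∀ i : ℕ, R ((f ^ (-(i : ℤ))) x) = R ((f ^ (-(i : ℤ))) z)) →
        sinaiPhiStar f star φ x = sinaiPhiStar f star φ z) :=
  sinai_coboundary_theorem_general f R y star φ hcode hstarPast hstarFuture C θ hθ0 hθ1 hHolder
end

section
/- Gluing periodic orbits to establish recurrence: let Σ̃ be an irreducible TMS, φ weakly Hölder with Hölder constants C_H', γ and P = P_G(φ) < ∞, and suppose there exist symbols a, b, a connecting admissible word W from b to a of length m, and n_k ↑ ∞ such that Σ_k Σ_{words W̃ of length n_k from a to b} e^{φ_{n_k}(S^{(W̃·W)}) − n_k P} = ∞, where S^{(W')} is the periodic chain with repeating word W'. Then Σ_{n≥1} Σ_{S: σ^n S = S, S_0 = a} e^{φ_n(S) − nP} = ∞, i.e. φ is recurrent. -/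
/-!
Gluing the connecting word `W` onto a word of length `n` from `a` to `b` yields a periodic
orbit through `a` of period `n + m`. The Birkhoff sum over the first `n` steps differs from
the full one by the `m` terms along `W`, so each glued weight is at most `e^{m (‖φ‖_∞ + |P|)}`
times the corresponding weight in the recurrence series. Distinct `n_k` give distinct periods,
so the divergent glued series is dominated by a constant times the recurrence series.
-/

open scoped ENNReal

open Function

theorem neg_mul_le_birkhoffSum {α : Type*} (f : α → α) {g : α → ℝ} {K : ℝ}
    (hg : ∀ x, |g x| ≤ K) (n : ℕ) (x : α) : -(n * K) ≤ birkhoffSum f g n x := by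
  calc -(n * K) = ∑ _k ∈ Finset.range n, -K := by simp
    _ ≤ birkhoffSum f g n x := Finset.sum_le_sum fun k _ => neg_le_of_abs_le (hg _)

theorem birkhoffSum_sub_mul_le {α : Type*} (f : α → α) {g : α → ℝ} {K : ℝ}
    (hg : ∀ x, |g x| ≤ K) (P : ℝ) (n m : ℕ) (x : α) :
    birkhoffSum f g n x - n * P
      ≤ m * (K + |P|) + (birkhoffSum f g (n + m) x - (n + m : ℕ) * P) := by
  have htail := neg_mul_le_birkhoffSum f hg m (f^[n] x)
  have hP : (m : ℝ) * P ≤ m * |P| := mul_le_mul_of_nonneg_left (le_abs_self P) m.cast_nonneg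
  rw [birkhoffSum_add]
  push_cast
  linarith

theorem ofReal_exp_birkhoffSum_le {α : Type*} (f : α → α) {g : α → ℝ} {K : ℝ}
    (hg : ∀ x, |g x| ≤ K) (P : ℝ) (n m : ℕ) (x : α) :
    ENNReal.ofReal (Real.exp (birkhoffSum f g n x - n * P))
      ≤ ENNReal.ofReal (Real.exp (m * (K + |P|)))
        * ENNReal.ofReal (Real.exp (birkhoffSum f g (n + m) x - (n + m : ℕ) * P)) := by
  rw [← ENNReal.ofReal_mul (Real.exp_nonneg _), ← Real.exp_add]
  exact ENNReal.ofReal_le_ofReal (Real.exp_le_exp.2 (birkhoffSum_sub_mul_le f hg P n m x))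

theorem tsum_ofReal_exp_birkhoffSum_le {α : Type*} (f : α → α) {g : α → ℝ} {K : ℝ}
    (hg : ∀ x, |g x| ≤ K) (P : ℝ) (n m : ℕ) {p q : α → Prop} (hpq : ∀ x, p x → q x) :
    ∑' x : {x // p x}, ENNReal.ofReal (Real.exp (birkhoffSum f g n x - n * P))
      ≤ ENNReal.ofReal (Real.exp (m * (K + |P|)))
        * ∑' x : {x // q x},
          ENNReal.ofReal (Real.exp (birkhoffSum f g (n + m) x - (n + m : ℕ) * P)) := by
  rw [← ENNReal.tsum_mul_left]
  exact (ENNReal.tsum_le_tsum fun x : {x // p x} => ofReal_exp_birkhoffSum_le f hg P n m x).trans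
    (ENNReal.tsum_mono_subtype (fun x => ENNReal.ofReal (Real.exp (m * (K + |P|))) *
      ENNReal.ofReal (Real.exp (birkhoffSum f g (n + m) x - (n + m : ℕ) * P))) hpq)

theorem ENNReal.tsum_eq_top_of_le_mul_comp {ι κ : Type*} {F : ι → ℝ≥0∞} {G : κ → ℝ≥0∞}
    {e : κ → ι} (he : Injective e) {C : ℝ≥0∞} (hC : C ≠ ⊤) (hG : ∑' k, G k = ⊤)
    (hle : ∀ k, G k ≤ C * F (e k)) : ∑' i, F i = ⊤ := by
  have : ⊤ ≤ C * ∑' i, F i :=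
    calc ⊤ = ∑' k, G k := hG.symm
      _ ≤ ∑' k, C * F (e k) := ENNReal.tsum_le_tsum hle
      _ = C * ∑' k, F (e k) := ENNReal.tsum_mul_left
      _ ≤ C * ∑' i, F i := by gcongr; exact ENNReal.tsum_comp_le_tsum_of_injective he F
  by_contra hF
  exact ENNReal.mul_ne_top hC hF (top_unique this)

theorem gluing_periodic_orbits_recurrence_general
    {S2 A : Type*} (σ : S2 ≃ S2) (coord : S2 → ℤ → A)
    (φ : S2 → ℝ) (P : ℝ)
    (Kφ : ℝ) (hbdd : ∀ S : S2, |φ S| ≤ Kφ)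
    (a b : A) (m : ℕ) (hm : 1 ≤ m)
    (W : ℕ → A)
    (nk : ℕ → ℕ) (hnk : StrictMono nk)
    -- divergence of the glued-word series
    (hdiv : ∑' k : ℕ, ∑' S : {S : S2 // (⇑σ)^[nk k + m] S = S ∧
        coord S 0 = a ∧ coord S (((nk k - 1 : ℕ) : ℤ)) = b ∧
        ∀ i : ℕ, i < m → coord S (((nk k + i : ℕ) : ℤ)) = W i},
      ENNReal.ofReal (Real.exp
        ((∑ j ∈ Finset.range (nk k), φ ((⇑σ)^[j] S.1)) - (nk k) * P)) = ⊤) :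
    ∑' n : ℕ, ∑' S : {S : S2 // (⇑σ)^[n + 1] S = S ∧ coord S 0 = a},
      ENNReal.ofReal (Real.exp
        ((∑ j ∈ Finset.range (n + 1), φ ((⇑σ)^[j] S.1)) - (n + 1) * P)) = ⊤ := by
  have hperiod : Injective fun k => nk k + m - 1 := fun i j h =>
    hnk.injective (by simp only at h; omega)
  refine ENNReal.tsum_eq_top_of_le_mul_comp hperiod
    (C := ENNReal.ofReal (Real.exp (m * (Kφ + |P|)))) ENNReal.ofReal_ne_top hdiv fun k => ?_
  have hperiod_succ : nk k + m - 1 + 1 = nk k + m := by omega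
  have hperiod_cast : ((nk k + m - 1 : ℕ) : ℝ) + 1 = (nk k + m : ℕ) := by
    exact_mod_cast hperiod_succ
  rw [hperiod_succ, hperiod_cast]
  exact tsum_ofReal_exp_birkhoffSum_le σ hbdd P (nk k) m fun _ hS => ⟨hS.1, hS.2.1⟩

/-- **gluing periodic orbits to establish recurrence.**
Let `Σ̃` be an irreducible TMS with shift `σ`, `φ` weakly Hölder with
constants `CH', γ` and pressure `P`, and suppose there are symbols `a, b`, a
connecting admissible word `W` from `b` to `a` of length `m`, and `n_k ↑ ∞`
such that `Σ_k Σ_{words W̃ of length n_k from a to b}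
e^{φ_{n_k}(S^{(W̃·W)}) − n_k P} = ∞` (the inner sum indexed by the periodic
chains with repeating word `W̃·W`).  Then
`Σ_{n≥1} Σ_{S : σ^n S = S, S_0 = a} e^{φ_n(S) − nP} = ∞`,
i.e. `φ` is recurrent. -/
theorem gluing_periodic_orbits_recurrence
    {S2 A : Type*} (σ : S2 ≃ S2) (coord : S2 → ℤ → A)
    (φ : S2 → ℝ) (P : ℝ)
    (hshift : ∀ v : S2, ∀ i : ℤ, coord (σ v) i = coord v (i + 1))
    -- irreducibility (scene-setting)
    (hirr : ∀ S T : S2, ∃ n : ℕ, 1 ≤ n ∧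
      ∃ Q : S2, coord Q 0 = coord S 0 ∧ coord Q (n : ℤ) = coord T 0)
    -- `φ` bounded and weakly Hölder with constants `CH'`, `γ`
    (Kφ : ℝ) (hbdd : ∀ S : S2, |φ S| ≤ Kφ)
    (CH' γ : ℝ) (hCH' : 0 ≤ CH') (hγ0 : 0 < γ) (hγ1 : γ < 1)
    (hHolder : ∀ S T : S2, ∀ k : ℕ,
      (∀ i : ℤ, |i| ≤ (k : ℤ) → coord S i = coord T i) →
      |φ S - φ T| ≤ CH' * γ ^ k)
    (a b : A) (m : ℕ) (hm : 1 ≤ m)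
    (W : ℕ → A) (hW0 : W 0 = b) (hWlast : W (m - 1) = a)
    (nk : ℕ → ℕ) (hnk : StrictMono nk) (hnk1 : 1 ≤ nk 0)
    -- divergence of the glued-word series
    (hdiv : ∑' k : ℕ, ∑' S : {S : S2 // (⇑σ)^[nk k + m] S = S ∧
        coord S 0 = a ∧ coord S (((nk k - 1 : ℕ) : ℤ)) = b ∧
        ∀ i : ℕ, i < m → coord S (((nk k + i : ℕ) : ℤ)) = W i},
      ENNReal.ofReal (Real.exp
        ((∑ j ∈ Finset.range (nk k), φ ((⇑σ)^[j] S.1)) - (nk k) * P)) = ⊤) :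
    ∑' n : ℕ, ∑' S : {S : S2 // (⇑σ)^[n + 1] S = S ∧ coord S 0 = a},
      ENNReal.ofReal (Real.exp
        ((∑ j ∈ Finset.range (n + 1), φ ((⇑σ)^[j] S.1)) - (n + 1) * P)) = ⊤ :=
  gluing_periodic_orbits_recurrence_general σ coord φ P Kφ hbdd a b m hm W nk hnk hdiv
end

section
/- Converse direction: if φ is recurrent on the irreducible component Σ̃ coding the homoclinic class H_χ(p), i.e. Σ_{n≥1} Σ_{S: σ^n S = S, S_0 = a} e^{φ_n(S) − n P_G(φ)} = ∞ for a symbol a whose cylinder meets a coding of p in Σ̃^#, then Σ_{n≥1} Σ_{f^n(q)=q, q ∈ H_χ(p) ∩ Λ_l} e^{φ_n^f(q) − n·P_{H_χ(p)}(φ^f)} = ∞, using that every period-n periodic chain in [a] codes a period-n periodic point of f in H_χ(p) ∩ Λ_l, at most C_l chains code the same point, the Birkhoff sums differ by a bounded coboundary constant C, and P_G(φ) = P_{H_χ(p)}(φ^f). -/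
open scoped ENNReal

/-!
Coding a periodic chain `S` by the periodic point `π̂ S` changes the Birkhoff sum by at most `C`,
so each term of the symbolic series is at most `e^C` times the term of the manifold series at the
coded point; since at most `C_l` chains of `[a]` code the same point, the symbolic series at each
period is at most `C_l e^C` times the manifold series. A finite multiple of the manifold series
therefore diverges, hence so does the manifold series.
-/

namespace ENNReal

theorem tsum_comp_le_mul_tsum_of_fiber_encard_le {α β : Type*} (F : α → β)
    (g : β → ℝ≥0∞) {m : ℕ} (hF : ∀ b, (F ⁻¹' {b}).encard ≤ m) :
    ∑' a, g (F a) ≤ m * ∑' b, g b := by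
  rw [← ENNReal.tsum_fiberwise (fun a => g (F a)) F, ← ENNReal.tsum_mul_left]
  refine ENNReal.tsum_le_tsum fun b => ?_
  calc ∑' a : F ⁻¹' {b}, g (F a) = ∑' _ : F ⁻¹' {b}, g b :=
        tsum_congr fun a => congrArg g a.2
    _ = (F ⁻¹' {b}).encard * g b := ENNReal.tsum_set_const _ _
    _ ≤ m * g b := by
        gcongr
        exact_mod_cast ENat.toENNReal_le.mpr (hF b)

theorem tsum_ofReal_exp_le_of_fiber_encard_le {α β : Type*} (F : α → β) (u : α → ℝ)
    (v : β → ℝ) (C : ℝ) {m : ℕ} (hF : ∀ b, (F ⁻¹' {b}).encard ≤ m)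
    (huv : ∀ a, u a ≤ v (F a) + C) :
    ∑' a, ENNReal.ofReal (Real.exp (u a)) ≤
      ENNReal.ofReal (Real.exp C) * m * ∑' b, ENNReal.ofReal (Real.exp (v b)) := by
  have hterm : ∀ a, ENNReal.ofReal (Real.exp (u a)) ≤
      ENNReal.ofReal (Real.exp C) * ENNReal.ofReal (Real.exp (v (F a))) := fun a => by
    rw [← ENNReal.ofReal_mul (Real.exp_pos C).le, ← Real.exp_add]
    exact ENNReal.ofReal_le_ofReal (Real.exp_le_exp.mpr (by linarith [huv a]))
  calc ∑' a, ENNReal.ofReal (Real.exp (u a))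
      ≤ ∑' a, ENNReal.ofReal (Real.exp C) * ENNReal.ofReal (Real.exp (v (F a))) :=
        ENNReal.tsum_le_tsum hterm
    _ = ENNReal.ofReal (Real.exp C) * ∑' a, ENNReal.ofReal (Real.exp (v (F a))) :=
        ENNReal.tsum_mul_left
    _ ≤ ENNReal.ofReal (Real.exp C) * (m * ∑' b, ENNReal.ofReal (Real.exp (v b))) := by
        gcongr
        exact tsum_comp_le_mul_tsum_of_fiber_encard_le F _ hF
    _ = ENNReal.ofReal (Real.exp C) * m * ∑' b, ENNReal.ofReal (Real.exp (v b)) :=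
        (mul_assoc _ _ _).symm

theorem eq_top_of_top_le_mul {c x : ℝ≥0∞} (hc : c ≠ ⊤) (h : ⊤ ≤ c * x) : x = ⊤ := by
  by_contra hx
  exact ENNReal.mul_ne_top hc hx (top_le_iff.mp h)

end ENNReal

theorem Set.encard_preimage_subtypeMap_singleton_le {α β : Type*} {p s : α → Prop}
    {r : β → Prop} (π : α → β) (h : ∀ x, p x → r (π x)) (hps : ∀ x, p x → s x)
    (b : Subtype r) :
    (Subtype.map π h ⁻¹' {b}).encard ≤ {x | π x = b.1 ∧ s x}.encard := by
  rw [← Subtype.val_injective.encard_image]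
  refine Set.encard_le_encard ?_
  rintro _ ⟨x, hx, rfl⟩
  exact ⟨congrArg Subtype.val hx, hps x x.2⟩

theorem recurrence_implies_manifold_periodic_divergence_general
    {S2 M A : Type*} (σ : S2 ≃ S2) (coord : S2 → ℤ → A)
    (f : M → M) (πh : S2 → M) (φS : S2 → ℝ) (φM : M → ℝ) (P C : ℝ)
    (Cl : ℕ) (a : A) (H Λl : Set M)
    -- every period-`n` chain in `[a]` codes a period-`n` point in `H ∩ Λ_l`
    (hcode : ∀ n : ℕ, 1 ≤ n → ∀ S : S2, (⇑σ)^[n] S = S → coord S 0 = a →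
      πh S ∈ H ∩ Λl ∧ f^[n] (πh S) = πh S)
    -- at most `Cl` chains code the same point
    (hmult : ∀ q : M, {S : S2 | πh S = q ∧ coord S 0 = a}.Finite ∧
      {S : S2 | πh S = q ∧ coord S 0 = a}.ncard ≤ Cl)
    -- Birkhoff sums differ by a bounded constant
    (hbirk : ∀ n : ℕ, ∀ S : S2, (⇑σ)^[n] S = S →
      |(∑ k ∈ Finset.range n, φS ((⇑σ)^[k] S)) -
        (∑ k ∈ Finset.range n, φM (f^[k] (πh S)))| ≤ C)
    -- recurrence: divergence of the symbolic series
    (hrec : ∑' n : ℕ, ∑' S : {S : S2 // (⇑σ)^[n + 1] S = S ∧ coord S 0 = a},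
      ENNReal.ofReal (Real.exp
        ((∑ k ∈ Finset.range (n + 1), φS ((⇑σ)^[k] S.1)) - (n + 1) * P)) = ⊤) :
    ∑' n : ℕ, ∑' q : {q : M // q ∈ H ∩ Λl ∧ f^[n + 1] q = q},
      ENNReal.ofReal (Real.exp
        ((∑ k ∈ Finset.range (n + 1), φM (f^[k] q.1)) - (n + 1) * P)) = ⊤ := by
  have hperiod (n : ℕ) :=
    ENNReal.tsum_ofReal_exp_le_of_fiber_encard_le
      (Subtype.map (q := fun q => q ∈ H ∩ Λl ∧ f^[n + 1] q = q) πh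
        fun S (hS : _ ∧ _) => hcode (n + 1) n.succ_pos S hS.1 hS.2)
      (fun S => (∑ k ∈ Finset.range (n + 1), φS ((⇑σ)^[k] S.1)) - (n + 1) * P)
      (fun q => (∑ k ∈ Finset.range (n + 1), φM (f^[k] q.1)) - (n + 1) * P) C
      (fun q => (Set.encard_preimage_subtypeMap_singleton_le _ _ (fun _ hS => hS.2) q).trans
        (Set.encard_le_coe_iff_finite_ncard_le.mpr (hmult q.1)))
      (fun S => by
        simp only [Subtype.map_coe]
        linarith [(abs_le.mp (hbirk (n + 1) S.1 S.2.1)).2])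
  refine ENNReal.eq_top_of_top_le_mul (c := ENNReal.ofReal (Real.exp C) * Cl) (by finiteness) ?_
  rw [← hrec, ← ENNReal.tsum_mul_left]
  exact ENNReal.tsum_le_tsum hperiod

/-- **converse direction: recurrence implies divergence of the
periodic-point series on the manifold.**  If `φS` is recurrent on the
irreducible component coding `H_χ(p)`, i.e.
`Σ_{n≥1} Σ_{S : σ^n S = S, S_0 = a} e^{φ_n(S) − nP} = ∞` for a symbol `a`
whose cylinder meets a coding of `p`, then
`Σ_{n≥1} Σ_{f^n(q)=q, q ∈ H_χ(p)∩Λ_l} e^{φ_n^f(q) − nP} = ∞`, using that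
every period-`n` periodic chain in `[a]` codes a period-`n` periodic point of
`f` in `H_χ(p) ∩ Λ_l`, at most `Cl` chains code the same point, the Birkhoff
sums differ by a bounded coboundary constant `C`, and
`P_G(φ) = P_{H_χ(p)}(φ^f)` (the same `P` appears in both series). -/
theorem recurrence_implies_manifold_periodic_divergence
    {S2 M A : Type*} (σ : S2 ≃ S2) (coord : S2 → ℤ → A)
    (f : M → M) (πh : S2 → M) (φS : S2 → ℝ) (φM : M → ℝ) (P C : ℝ)
    (Cl : ℕ) (a : A) (p : M) (H Λl : Set M)
    -- the cylinder `[a]` meets a coding of `p`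
    (hp : ∃ S : S2, coord S 0 = a ∧ πh S = p)
    -- countably many periodic chains of each period in `[a]`
    (hctbl : ∀ n : ℕ, {S : S2 | (⇑σ)^[n] S = S ∧ coord S 0 = a}.Countable)
    -- every period-`n` chain in `[a]` codes a period-`n` point in `H ∩ Λ_l`
    (hcode : ∀ n : ℕ, 1 ≤ n → ∀ S : S2, (⇑σ)^[n] S = S → coord S 0 = a →
      πh S ∈ H ∩ Λl ∧ f^[n] (πh S) = πh S)
    -- at most `Cl` chains code the same point
    (hmult : ∀ q : M, {S : S2 | πh S = q ∧ coord S 0 = a}.Finite ∧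
      {S : S2 | πh S = q ∧ coord S 0 = a}.ncard ≤ Cl)
    -- Birkhoff sums differ by a bounded constant
    (hbirk : ∀ n : ℕ, ∀ S : S2, (⇑σ)^[n] S = S →
      |(∑ k ∈ Finset.range n, φS ((⇑σ)^[k] S)) -
        (∑ k ∈ Finset.range n, φM (f^[k] (πh S)))| ≤ C)
    -- recurrence: divergence of the symbolic series
    (hrec : ∑' n : ℕ, ∑' S : {S : S2 // (⇑σ)^[n + 1] S = S ∧ coord S 0 = a},
      ENNReal.ofReal (Real.exp
        ((∑ k ∈ Finset.range (n + 1), φS ((⇑σ)^[k] S.1)) - (n + 1) * P)) = ⊤) :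
    ∑' n : ℕ, ∑' q : {q : M // q ∈ H ∩ Λl ∧ f^[n + 1] q = q},
      ENNReal.ofReal (Real.exp
        ((∑ k ∈ Finset.range (n + 1), φM (f^[k] q.1)) - (n + 1) * P)) = ⊤ :=
  recurrence_implies_manifold_periodic_divergence_general σ coord f πh φS φM P C Cl a H Λl hcode
    hmult hbirk hrec
end
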